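/- Let G be a group with a finite generating set S, equipped with the word metric d, and let H be an almost normal subgroup of G. Set K := max over s ∈ S of the Hausdorff distance d_Haus(H, sH) (which is finite). Then: (i) for all g, k ∈ G, d_Haus(gH, kH) ≤ K·d(g,k); and (ii) any two left cosets gH, kH can be joined by a K-chain of left cosets with respect to d_Haus (i.e. a sequence of cosets gH = C₀, C₁, …, Cₙ = kH with d_Haus(C_{i−1}, C_i) ≤ K) of length n at most d_Haus(gH, kH). -/

import Mathlib

/-!
Left translation is an isometry of the word metric, hence also of `d_Haus`, so for a generator
`s` we get `d_Haus(gH, gsH) = d_Haus(H, sH) ≤ K`, and the same for `s⁻¹` by symmetry.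
Following a geodesic word from `g` to `k` and using the triangle inequality gives (i).
For (ii), word distances are integers, so some `b ∈ kH` realises `d(g, kH) ≤ d_Haus(gH, kH)`,
and a geodesic word from `g` to `b` is the required chain. Almost normality is what makes all
these Hausdorff distances finite, i.e. the infima nonempty, so that the triangle inequality
holds for the real-valued `sInf`.
-/

open Pointwise

/-- The conjugate subgroup `gHg⁻¹`. -/
def conjSubgroup {G : Type*} [Group G] (g : G) (H : Subgroup G) : Subgroup G :=
  H.map (MulAut.conj g).toMonoidHom

/-- A subgroup `H ≤ G` is almost normal if `H` is commensurable with each of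
its conjugates `gHg⁻¹`. -/
def AlmostNormal {G : Type*} [Group G] (H : Subgroup G) : Prop :=
  ∀ g : G, Subgroup.Commensurable H (conjSubgroup g H)

/-- The word length of `g` with respect to the generating set `S`: the least `n`
such that `g` is a product of `n` elements of `S ∪ S⁻¹`. -/
noncomputable def wordLength {G : Type*} [Group G] (S : Set G) (g : G) : ℕ :=
  sInf {n : ℕ | ∃ l : List G, l.length = n ∧ (∀ x ∈ l, x ∈ S ∪ S⁻¹) ∧ l.prod = g}

/-- The word metric on `G` with respect to the generating set `S`. -/
noncomputable def wordDist {G : Type*} [Group G] (S : Set G) (g k : G) : ℝ :=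
  (wordLength S (g⁻¹ * k) : ℝ)

/-- The Hausdorff distance between two subsets of `G` with respect to the word
metric determined by `S`. -/
noncomputable def wordHausdorffDist {G : Type*} [Group G] (S : Set G) (A B : Set G) : ℝ :=
  sInf {r : ℝ | 0 ≤ r ∧ (∀ a ∈ A, ∃ b ∈ B, wordDist S a b ≤ r) ∧
    ∀ b ∈ B, ∃ a ∈ A, wordDist S a b ≤ r}

section WordMetric

variable {G : Type*} [Group G] {S : Set G}

lemma exists_list_length_eq_wordLength (hgen : Subgroup.closure S = ⊤) (g : G) :
    ∃ l : List G, l.length = wordLength S g ∧ (∀ x ∈ l, x ∈ S ∪ S⁻¹) ∧ l.prod = g := by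
  have hg : g ∈ (Subgroup.closure S).toSubmonoid := by rw [hgen]; trivial
  rw [Subgroup.closure_toSubmonoid] at hg
  obtain ⟨l, hl, hprod⟩ := Submonoid.exists_list_of_mem_closure hg
  exact Nat.sInf_mem
    (s := {n | ∃ l : List G, l.length = n ∧ (∀ x ∈ l, x ∈ S ∪ S⁻¹) ∧ l.prod = g})
    ⟨l.length, l, rfl, hl, hprod⟩

lemma wordLength_prod_le_length {l : List G} (hl : ∀ x ∈ l, x ∈ S ∪ S⁻¹) :
    wordLength S l.prod ≤ l.length :=
  Nat.sInf_le ⟨l, rfl, hl, rfl⟩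

lemma wordLength_one : wordLength S (1 : G) = 0 :=
  Nat.le_zero.mp (wordLength_prod_le_length (l := []) (by simp))

lemma wordLength_mul_le (hgen : Subgroup.closure S = ⊤) (g k : G) :
    wordLength S (g * k) ≤ wordLength S g + wordLength S k := by
  obtain ⟨l₁, h₁, hl₁, rfl⟩ := exists_list_length_eq_wordLength hgen g
  obtain ⟨l₂, h₂, hl₂, rfl⟩ := exists_list_length_eq_wordLength hgen k
  rw [← h₁, ← h₂, ← List.length_append, ← List.prod_append]
  exact wordLength_prod_le_length (List.forall_mem_append.mpr ⟨hl₁, hl₂⟩)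

lemma wordLength_inv_le (hgen : Subgroup.closure S = ⊤) (g : G) :
    wordLength S g⁻¹ ≤ wordLength S g := by
  obtain ⟨l, hlen, hl, rfl⟩ := exists_list_length_eq_wordLength hgen g
  rw [← hlen, List.prod_inv_reverse, ← List.length_map (f := (·⁻¹)), ← List.length_reverse]
  refine wordLength_prod_le_length fun x hx => ?_
  simp only [List.mem_reverse, List.mem_map] at hx
  obtain ⟨y, hy, rfl⟩ := hx
  simpa [or_comm] using hl y hy

lemma wordLength_inv (hgen : Subgroup.closure S = ⊤) (g : G) :
    wordLength S g⁻¹ = wordLength S g :=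
  (wordLength_inv_le hgen g).antisymm (by simpa using wordLength_inv_le hgen g⁻¹)

lemma wordDist_self (g : G) : wordDist S g g = 0 := by
  simp [wordDist, wordLength_one]

lemma wordDist_mul_left (g a b : G) : wordDist S (g * a) (g * b) = wordDist S a b := by
  simp only [wordDist, mul_inv_rev, mul_assoc, inv_mul_cancel_left]

lemma wordDist_comm (hgen : Subgroup.closure S = ⊤) (a b : G) :
    wordDist S a b = wordDist S b a := by
  rw [wordDist, wordDist, ← wordLength_inv hgen, mul_inv_rev, inv_inv]

lemma wordDist_triangle (hgen : Subgroup.closure S = ⊤) (a b c : G) :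
    wordDist S a c ≤ wordDist S a b + wordDist S b c := by
  have := wordLength_mul_le hgen (a⁻¹ * b) (b⁻¹ * c)
  rw [mul_assoc, mul_inv_cancel_left] at this
  simp only [wordDist]
  exact_mod_cast this

lemma exists_path_wordLength (hgen : Subgroup.closure S = ⊤) (g b : G) :
    ∃ c : ℕ → G, c 0 = g ∧ c (wordLength S (g⁻¹ * b)) = b ∧
      ∀ i < wordLength S (g⁻¹ * b), (c i)⁻¹ * c (i + 1) ∈ S ∪ S⁻¹ := by
  obtain ⟨l, hlen, hl, hprod⟩ := exists_list_length_eq_wordLength hgen (g⁻¹ * b)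
  refine ⟨fun i => g * (l.take i).prod, by simp, ?_, fun i hi => ?_⟩
  · simp only [← hlen, List.take_length, hprod, mul_inv_cancel_left]
  · rw [← hlen] at hi
    dsimp only
    rw [List.prod_take_succ l i hi, ← mul_assoc g, inv_mul_cancel_left]
    exact hl _ (List.getElem_mem hi)

end WordMetric

section Hausdorff

variable {G : Type*} [Group G] {S : Set G}

variable (S) in
def hausdorffBounds (A B : Set G) : Set ℝ :=
  {r : ℝ | 0 ≤ r ∧ (∀ a ∈ A, ∃ b ∈ B, wordDist S a b ≤ r) ∧
    ∀ b ∈ B, ∃ a ∈ A, wordDist S a b ≤ r}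

lemma wordHausdorffDist_eq_sInf (A B : Set G) :
    wordHausdorffDist S A B = sInf (hausdorffBounds S A B) := rfl

lemma wordHausdorffDist_le_of_mem {A B : Set G} {r : ℝ} (hr : r ∈ hausdorffBounds S A B) :
    wordHausdorffDist S A B ≤ r :=
  csInf_le ⟨0, fun _ hr => hr.1⟩ hr

lemma wordHausdorffDist_self (A : Set G) : wordHausdorffDist S A A = 0 := by
  refine le_antisymm (wordHausdorffDist_le_of_mem ⟨le_rfl, ?_, ?_⟩)
    (Real.sInf_nonneg fun _ hr => hr.1)
  all_goals exact fun a ha => ⟨a, ha, (wordDist_self a).le⟩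

lemma hausdorffBounds_smul (g : G) (A B : Set G) :
    hausdorffBounds S (g • A) (g • B) = hausdorffBounds S A B := by
  ext r
  simp only [hausdorffBounds, ← Set.image_smul, Set.forall_mem_image, Set.exists_mem_image,
    smul_eq_mul, wordDist_mul_left, Set.mem_ofPred_eq]

lemma wordHausdorffDist_smul (g : G) (A B : Set G) :
    wordHausdorffDist S (g • A) (g • B) = wordHausdorffDist S A B := by
  rw [wordHausdorffDist_eq_sInf, hausdorffBounds_smul, wordHausdorffDist_eq_sInf]

lemma hausdorffBounds_comm (hgen : Subgroup.closure S = ⊤) (A B : Set G) :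
    hausdorffBounds S A B = hausdorffBounds S B A := by
  have hsub : ∀ A B : Set G, hausdorffBounds S A B ⊆ hausdorffBounds S B A :=
    fun A B r ⟨hr₀, hAB, hBA⟩ => ⟨hr₀,
      fun b hb => (hBA b hb).imp fun a ⟨ha, h⟩ => ⟨ha, wordDist_comm hgen a b ▸ h⟩,
      fun a ha => (hAB a ha).imp fun b ⟨hb, h⟩ => ⟨hb, wordDist_comm hgen a b ▸ h⟩⟩
  exact (hsub A B).antisymm (hsub B A)

lemma wordHausdorffDist_comm (hgen : Subgroup.closure S = ⊤) (A B : Set G) :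
    wordHausdorffDist S A B = wordHausdorffDist S B A := by
  rw [wordHausdorffDist_eq_sInf, hausdorffBounds_comm hgen, wordHausdorffDist_eq_sInf]

lemma add_mem_hausdorffBounds (hgen : Subgroup.closure S = ⊤) {A B C : Set G} {x y : ℝ}
    (hx : x ∈ hausdorffBounds S A B) (hy : y ∈ hausdorffBounds S B C) :
    x + y ∈ hausdorffBounds S A C := by
  obtain ⟨hx₀, hAB, hBA⟩ := hx
  obtain ⟨hy₀, hBC, hCB⟩ := hy
  refine ⟨add_nonneg hx₀ hy₀, fun a ha => ?_, fun c hc => ?_⟩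
  · obtain ⟨b, hb, hab⟩ := hAB a ha
    obtain ⟨c, hc, hbc⟩ := hBC b hb
    exact ⟨c, hc, (wordDist_triangle hgen a b c).trans (add_le_add hab hbc)⟩
  · obtain ⟨b, hb, hbc⟩ := hCB c hc
    obtain ⟨a, ha, hab⟩ := hBA b hb
    exact ⟨a, ha, (wordDist_triangle hgen a b c).trans (add_le_add hab hbc)⟩

lemma wordHausdorffDist_triangle (hgen : Subgroup.closure S = ⊤) {A B C : Set G}
    (hAB : (hausdorffBounds S A B).Nonempty) (hBC : (hausdorffBounds S B C).Nonempty) :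
    wordHausdorffDist S A C ≤ wordHausdorffDist S A B + wordHausdorffDist S B C := by
  rw [← sub_le_iff_le_add]
  refine le_csInf hAB fun x hx => ?_
  rw [sub_le_comm]
  refine le_csInf hBC fun y hy => ?_
  rw [sub_le_iff_le_add']
  exact wordHausdorffDist_le_of_mem (add_mem_hausdorffBounds hgen hx hy)

/-- Word distances are natural numbers, so the distance from a point to a set is attained. -/
lemma exists_wordDist_le_wordHausdorffDist {A B : Set G} {a : G} (ha : a ∈ A)
    (hAB : (hausdorffBounds S A B).Nonempty) :
    ∃ b ∈ B, wordDist S a b ≤ wordHausdorffDist S A B := by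
  set N : Set ℕ := {n | ∃ b ∈ B, wordLength S (a⁻¹ * b) = n}
  have hN : N.Nonempty := by
    obtain ⟨r, -, hr, -⟩ := hAB
    obtain ⟨b, hb, -⟩ := hr a ha
    exact ⟨_, b, hb, rfl⟩
  obtain ⟨b, hb, hbN⟩ := Nat.sInf_mem hN
  refine ⟨b, hb, le_csInf hAB fun r ⟨_, hr, _⟩ => ?_⟩
  obtain ⟨b', hb', hab'⟩ := hr a ha
  calc wordDist S a b = sInf N := by rw [wordDist, hbN]
    _ ≤ wordDist S a b' := Nat.cast_le.mpr (Nat.sInf_le ⟨b', hb', rfl⟩)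
    _ ≤ r := hab'

lemma wordHausdorffDist_le_of_chain (hgen : Subgroup.closure S = ⊤) {A : ℕ → Set G}
    (hA : ∀ i j, (hausdorffBounds S (A i) (A j)).Nonempty) {K : ℝ} {n : ℕ}
    (hstep : ∀ i < n, wordHausdorffDist S (A i) (A (i + 1)) ≤ K) :
    wordHausdorffDist S (A 0) (A n) ≤ K * n := by
  induction n with
  | zero => simp [wordHausdorffDist_self]
  | succ n ih =>
    calc wordHausdorffDist S (A 0) (A (n + 1))
        ≤ wordHausdorffDist S (A 0) (A n) + wordHausdorffDist S (A n) (A (n + 1)) :=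
          wordHausdorffDist_triangle hgen (hA _ _) (hA _ _)
      _ ≤ K * n + K := add_le_add (ih fun i hi => hstep i (by omega)) (hstep n n.lt_succ_self)
      _ = K * ↑(n + 1) := by push_cast; ring

lemma wordHausdorffDist_smul_le_of_inv_mul_mem (hgen : Subgroup.closure S = ⊤) {A : Set G}
    {K : ℝ} (hK : ∀ s ∈ S, wordHausdorffDist S A (s • A) ≤ K) {g k : G}
    (hgk : g⁻¹ * k ∈ S ∪ S⁻¹) :
    wordHausdorffDist S (g • A) (k • A) ≤ K := by
  obtain ⟨s, hs, rfl⟩ : ∃ s ∈ S ∪ S⁻¹, g * s = k := ⟨_, hgk, mul_inv_cancel_left g k⟩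
  rw [← smul_smul, wordHausdorffDist_smul]
  rcases hs with hs | hs
  · exact hK s hs
  · rw [← wordHausdorffDist_smul s⁻¹, inv_smul_smul, wordHausdorffDist_comm hgen]
    exact hK _ hs

end Hausdorff

section AlmostNormal

variable {G : Type*} [Group G]

lemma Subgroup.exists_finite_forall_inv_mul_mem_of_relIndex_ne_zero {H L : Subgroup G}
    (h : L.relIndex H ≠ 0) : ∃ T : Set G, T.Finite ∧ ∀ x ∈ H, ∃ t ∈ T, t⁻¹ * x ∈ L := by
  have : Finite (H ⧸ L.subgroupOf H) := (Nat.card_ne_zero.mp h).2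
  refine ⟨Set.range fun q : H ⧸ L.subgroupOf H => (q.out : G), Set.finite_range _,
    fun x hx => ⟨_, ⟨QuotientGroup.mk ⟨x, hx⟩, rfl⟩, ?_⟩⟩
  obtain ⟨l, hl⟩ := QuotientGroup.mk_out_eq_mul (L.subgroupOf H) ⟨x, hx⟩
  dsimp only
  rw [hl]
  simpa using L.inv_mem (Subgroup.mem_subgroupOf.mp l.2)

lemma mem_conjSubgroup_iff {g x : G} {H : Subgroup G} :
    x ∈ conjSubgroup g H ↔ g⁻¹ * x * g ∈ H := by
  constructor
  · rintro ⟨y, hy, rfl⟩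
    simpa [mul_assoc] using hy
  · exact fun h => ⟨_, h, by simp [mul_assoc]⟩

variable {S : Set G} {H : Subgroup G}

/-- If `x⁻¹ = t · g v g⁻¹` with `t` from a finite set of coset representatives of
`H ∩ gHg⁻¹` in `H`, then `x t g ∈ gH` lies at distance `|t g|` from `x`. -/
lemma AlmostNormal.exists_wordDist_le (han : AlmostNormal H) (g : G) :
    ∃ r : ℝ, ∀ x ∈ H, ∃ b ∈ g • (H : Set G), wordDist S x b ≤ r := by
  obtain ⟨T, hT, hTH⟩ :=
    Subgroup.exists_finite_forall_inv_mul_mem_of_relIndex_ne_zero (han g).2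
  obtain ⟨r, hr⟩ := (hT.image fun t => (wordLength S (t * g) : ℝ)).bddAbove
  refine ⟨r, fun x hx => ?_⟩
  obtain ⟨t, ht, htx⟩ := hTH x⁻¹ (H.inv_mem hx)
  refine ⟨x * t * g, (mem_leftCoset_iff g).mpr (SetLike.mem_coe.mpr ?_), ?_⟩
  · convert H.inv_mem (mem_conjSubgroup_iff.mp htx) using 1
    group
  · rw [wordDist, mul_assoc, inv_mul_cancel_left]
    exact hr ⟨t, ht, rfl⟩

lemma AlmostNormal.hausdorffBounds_nonempty (hgen : Subgroup.closure S = ⊤)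
    (han : AlmostNormal H) (g k : G) :
    (hausdorffBounds S (g • (H : Set G)) (k • (H : Set G))).Nonempty := by
  rw [← hausdorffBounds_smul g⁻¹, smul_smul, smul_smul, inv_mul_cancel, one_smul]
  generalize g⁻¹ * k = u
  obtain ⟨r₁, h₁⟩ := han.exists_wordDist_le (S := S) u
  obtain ⟨r₂, h₂⟩ := han.exists_wordDist_le (S := S) u⁻¹
  refine ⟨max (max r₁ r₂) 0, le_max_right _ _, fun a ha => ?_, fun b hb => ?_⟩
  · obtain ⟨b, hb, hab⟩ := h₁ a ha
    exact ⟨b, hb, le_max_of_le_left (le_max_of_le_left hab)⟩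
  · obtain ⟨c, hc, hbc⟩ := h₂ (u⁻¹ * b) ((mem_leftCoset_iff u).mp hb)
    refine ⟨u * c, by simpa using (mem_leftCoset_iff u⁻¹).mp hc, ?_⟩
    rw [wordDist_comm hgen, ← wordDist_mul_left u⁻¹, inv_mul_cancel_left]
    exact le_max_of_le_left (le_max_of_le_right hbc)

end AlmostNormal

/-- Let `H` be an almost normal subgroup of a group `G` with finite generating set
`S`, and let `K` be the maximum over `s ∈ S` of `d_Haus(H, sH)`. Then
(i) `d_Haus(gH, kH) ≤ K·d(g,k)` for all `g, k ∈ G`, and (ii) any two left cosets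
`gH, kH` can be joined by a `K`-chain of left cosets (with respect to `d_Haus`)
of length at most `d_Haus(gH, kH)`. -/
theorem coset_space_quasi_geodesic {G : Type*} [Group G] (S : Set G) (hS : S.Finite)
    (hgen : Subgroup.closure S = ⊤) (H : Subgroup G) (han : AlmostNormal H)
    (K : ℝ)
    (hK : K = sSup ((fun s => wordHausdorffDist S (H : Set G) (s • (H : Set G))) '' S)) :
    (∀ g k : G,
      wordHausdorffDist S (g • (H : Set G)) (k • (H : Set G)) ≤ K * wordDist S g k) ∧
    ∀ g k : G, ∃ (n : ℕ) (c : ℕ → G),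
      c 0 • (H : Set G) = g • (H : Set G) ∧ c n • (H : Set G) = k • (H : Set G) ∧
      (∀ i : ℕ, i < n →
        wordHausdorffDist S (c i • (H : Set G)) (c (i + 1) • (H : Set G)) ≤ K) ∧
      (n : ℝ) ≤ wordHausdorffDist S (g • (H : Set G)) (k • (H : Set G)) := by
  have hKS : ∀ s ∈ S, wordHausdorffDist S (H : Set G) (s • (H : Set G)) ≤ K :=
    fun s hs => hK ▸ le_csSup (hS.image _).bddAbove (Set.mem_image_of_mem _ hs)
  have hpath (g b : G) : ∃ c : ℕ → G, c 0 = g ∧ c (wordLength S (g⁻¹ * b)) = b ∧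
      ∀ i < wordLength S (g⁻¹ * b),
        wordHausdorffDist S (c i • (H : Set G)) (c (i + 1) • (H : Set G)) ≤ K := by
    obtain ⟨c, hc₀, hcn, hc⟩ := exists_path_wordLength hgen g b
    exact ⟨c, hc₀, hcn, fun i hi => wordHausdorffDist_smul_le_of_inv_mul_mem hgen hKS (hc i hi)⟩
  refine ⟨fun g k => ?_, fun g k => ?_⟩
  · obtain ⟨c, hc₀, hcn, hc⟩ := hpath g k
    have := wordHausdorffDist_le_of_chain hgen
      (fun i j => han.hausdorffBounds_nonempty hgen (c i) (c j)) hc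
    rwa [hc₀, hcn] at this
  · obtain ⟨b, hb, hgb⟩ := exists_wordDist_le_wordHausdorffDist (mem_own_leftCoset H.toSubmonoid g)
      (han.hausdorffBounds_nonempty hgen g k)
    obtain ⟨c, hc₀, hcn, hc⟩ := hpath g b
    refine ⟨_, c, by rw [hc₀], ?_, hc, hgb⟩
    rw [hcn, leftCoset_eq_iff]
    simpa using H.inv_mem ((mem_leftCoset_iff k).mp hb)
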